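/- arXiv:1706.08102 — 4 statements merged into one kernel-verified Lean document; each statement's English description precedes it below -/
import Mathlib

section
/- Let q be a Poisson bracket on a commutative algebra A, and suppose a_1,...,a_n, b_1,...,b_n ∈ A satisfy the canonical relations q(a_i,a_j)=q(b_i,b_j)=0, q(a_i,b_j)=δ_{ij}, and generate a dense subalgebra B of A (meaning every derivation of A vanishing on B vanishes on A). Then q(f,g) = Σ_{k=1}^n (q(f,b_k) q(a_k,g) − q(g,b_k) q(a_k,f)) for all f,g ∈ A. -/
/-- If `q` is a Poisson bracket, the elements `a i`, `b i` satisfy the canonical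
relations and generate a dense subalgebra `B` (every derivation of `A` vanishing on `B`
vanishes), then `q f g = Σ_k (q f (b k) * q (a k) g - q g (b k) * q (a k) f)` on all of `A`. -/
theorem stmt4 {K A : Type*} [Field K] [CharZero K] [CommRing A] [Algebra K A]
    (q : A →ₗ[K] A →ₗ[K] A)
    (hanti : ∀ a b : A, q a b = - q b a)
    (hleib : ∀ a b c : A, q a (b * c) = q a b * c + b * q a c)
    (hjac : ∀ a b c : A, q (q a b) c + q (q b c) a + q (q c a) b = 0)
    (n : ℕ) (a b : Fin n → A)
    (haa : ∀ i j : Fin n, q (a i) (a j) = 0)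
    (hbb : ∀ i j : Fin n, q (b i) (b j) = 0)
    (hab : ∀ i j : Fin n, q (a i) (b j) = if i = j then 1 else 0)
    (hdense : ∀ δ : Derivation K A A,
      (∀ x ∈ Algebra.adjoin K (Set.range a ∪ Set.range b), δ x = 0) → δ = 0) :
    ∀ f g : A, q f g = ∑ k, (q f (b k) * q (a k) g - q g (b k) * q (a k) f) := by
  -- f ↦ q f c is a derivation
  let D1 : A → Derivation K A A := fun c => Derivation.mk' (q.flip c) (by
    intro x y
    simp only [LinearMap.flip_apply, smul_eq_mul]
    rw [hanti (x * y) c, hleib, hanti x c, hanti y c]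
    ring)
  -- f ↦ q c f is a derivation
  let D2 : A → Derivation K A A := fun c => Derivation.mk' (q c) (by
    intro x y
    simp only [smul_eq_mul]
    rw [hleib]
    ring)
  have hD1 : ∀ c f : A, D1 c f = q f c := fun c f => by
    simp [D1, Derivation.coe_mk']
  have hD2 : ∀ c f : A, D2 c f = q c f := fun c f => by
    simp [D2, Derivation.coe_mk']
  have sum_apply : ∀ (D : Fin n → Derivation K A A) (x : A),
      (∑ k, D k) x = ∑ k, D k x := by
    intro D x
    induction (Finset.univ : Finset (Fin n)) using Finset.induction with
    | empty => simp
    | insert _ _ h ih => rw [Finset.sum_insert h, Finset.sum_insert h, Derivation.add_apply, ih]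
  intro f g
  set δ : Derivation K A A :=
    D1 g - ∑ k, ((q (a k) g) • D1 (b k) - (q g (b k)) • D2 (a k)) with hδ
  have hδval : ∀ x : A, δ x = q x g - ∑ k, (q x (b k) * q (a k) g - q g (b k) * q (a k) x) := by
    intro x
    simp only [hδ, Derivation.sub_apply, Derivation.coe_smul, Pi.smul_apply]
    rw [sum_apply]
    simp only [Derivation.sub_apply, Derivation.coe_smul, Pi.smul_apply, smul_eq_mul,
      hD1, hD2]
    congr 1
    apply Finset.sum_congr rfl
    intro k _
    ring
  -- δ vanishes on generators
  have hgen : ∀ x ∈ Set.range a ∪ Set.range b, δ x = 0 := by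
    rintro x (⟨i, rfl⟩ | ⟨i, rfl⟩)
    · rw [hδval]
      have : ∀ k, (q (a i) (b k) * q (a k) g - q g (b k) * q (a k) (a i))
          = if i = k then q (a k) g else 0 := by
        intro k
        rw [hab, haa]
        by_cases h : i = k <;> simp [h]
      rw [Finset.sum_congr rfl fun k _ => this k, Finset.sum_ite_eq, if_pos (Finset.mem_univ i)]
      simp
    · rw [hδval]
      have : ∀ k, (q (b i) (b k) * q (a k) g - q g (b k) * q (a k) (b i))
          = if k = i then -(q g (b i)) else 0 := by
        intro k
        rw [hbb, hab]
        by_cases h : k = i <;> simp [h]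
      rw [Finset.sum_congr rfl fun k _ => this k, Finset.sum_ite_eq', if_pos (Finset.mem_univ i)]
      rw [hanti (b i) g]
      ring
  have hadj : ∀ x ∈ Algebra.adjoin K (Set.range a ∪ Set.range b), δ x = 0 := by
    intro x hx
    have := Derivation.eqOn_adjoin (R := K) (D1 := δ) (D2 := 0)
      (fun y hy => by simpa using hgen y hy) hx
    simpa using this
  have hz : δ = 0 := hdense δ hadj
  have := hδval f
  rw [hz] at this
  simp only [Derivation.coe_zero, Pi.zero_apply] at this
  exact sub_eq_zero.mp this.symm
end

section
/- Let X = M_2(ℂ) × M_2(ℂ) with the Poisson bracket q = Σ_{k=1}^4 ∂/∂a_k ∧ ∂/∂b_k, where (A,B) have entries A = [[a_1,a_3],[a_4,a_2]], B = [[b_1,b_3],[b_4,b_2]]. Then the invariant functions α_1 = tr A, α_2 = det A, β_1 = tr B, β_2 = det B, γ = tr(AB) satisfy q(α_1, β_1) = 2, q(α_1, β_2) = β_1, q(α_2, β_1) = α_1, q(α_2, β_2) = γ, q(α_1, γ) = α_1 (acting as stated), and more precisely q restricted to these five functions coincides with q_red = 2 ∂_{α_1}∧∂_{β_1} + β_1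 ∂_{α_1}∧∂_{β_2} + α_1 ∂_{α_2}∧∂_{β_1} + γ ∂_{α_2}∧∂_{β_2} + (α_1 ∂_{α_1} − β_1 ∂_{β_1} + 2α_2 ∂_{α_2} − 2β_2 ∂_{β_2}) ∧ ∂_γ. -/
noncomputable def E1 (i j : Fin 2) :
    ((Fin 2 → Fin 2 → ℂ) × (Fin 2 → Fin 2 → ℂ)) →L[ℂ] ℂ :=
  (ContinuousLinearMap.proj (R := ℂ) (φ := fun _ : Fin 2 => ℂ) j).comp
    ((ContinuousLinearMap.proj (R := ℂ) (φ := fun _ : Fin 2 => Fin 2 → ℂ) i).comp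
      (ContinuousLinearMap.fst ℂ _ _))

noncomputable def E2 (i j : Fin 2) :
    ((Fin 2 → Fin 2 → ℂ) × (Fin 2 → Fin 2 → ℂ)) →L[ℂ] ℂ :=
  (ContinuousLinearMap.proj (R := ℂ) (φ := fun _ : Fin 2 => ℂ) j).comp
    ((ContinuousLinearMap.proj (R := ℂ) (φ := fun _ : Fin 2 => Fin 2 → ℂ) i).comp
      (ContinuousLinearMap.snd ℂ _ _))

lemma hE1 (i j : Fin 2) (p : (Fin 2 → Fin 2 → ℂ) × (Fin 2 → Fin 2 → ℂ)) :
    HasFDerivAt (fun p : (Fin 2 → Fin 2 → ℂ) × (Fin 2 → Fin 2 → ℂ) => p.1 i j) (E1 i j) p :=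
  (E1 i j).hasFDerivAt

lemma hE2 (i j : Fin 2) (p : (Fin 2 → Fin 2 → ℂ) × (Fin 2 → Fin 2 → ℂ)) :
    HasFDerivAt (fun p : (Fin 2 → Fin 2 → ℂ) × (Fin 2 → Fin 2 → ℂ) => p.2 i j) (E2 i j) p :=
  (E2 i j).hasFDerivAt

lemma E1app (i j : Fin 2) (v w : Fin 2 → Fin 2 → ℂ) : E1 i j (v, w) = v i j := rfl
lemma E2app (i j : Fin 2) (v w : Fin 2 → Fin 2 → ℂ) : E2 i j (v, w) = w i j := rfl

lemma fdA1 (p : (Fin 2 → Fin 2 → ℂ) × (Fin 2 → Fin 2 → ℂ)) :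
    fderiv ℂ (fun p : (Fin 2 → Fin 2 → ℂ) × (Fin 2 → Fin 2 → ℂ) => p.1 0 0 + p.1 1 1) p
      = E1 0 0 + E1 1 1 :=
  ((hE1 0 0 p).add (hE1 1 1 p)).fderiv

lemma fdB1 (p : (Fin 2 → Fin 2 → ℂ) × (Fin 2 → Fin 2 → ℂ)) :
    fderiv ℂ (fun p : (Fin 2 → Fin 2 → ℂ) × (Fin 2 → Fin 2 → ℂ) => p.2 0 0 + p.2 1 1) p
      = E2 0 0 + E2 1 1 :=
  ((hE2 0 0 p).add (hE2 1 1 p)).fderiv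

lemma fdA2 (p : (Fin 2 → Fin 2 → ℂ) × (Fin 2 → Fin 2 → ℂ)) :
    fderiv ℂ (fun p : (Fin 2 → Fin 2 → ℂ) × (Fin 2 → Fin 2 → ℂ) =>
      p.1 0 0 * p.1 1 1 - p.1 0 1 * p.1 1 0) p
      = (p.1 0 0 • E1 1 1 + p.1 1 1 • E1 0 0) - (p.1 0 1 • E1 1 0 + p.1 1 0 • E1 0 1) :=
  (((hE1 0 0 p).mul (hE1 1 1 p)).sub ((hE1 0 1 p).mul (hE1 1 0 p))).fderiv

lemma fdB2 (p : (Fin 2 → Fin 2 → ℂ) × (Fin 2 → Fin 2 → ℂ)) :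
    fderiv ℂ (fun p : (Fin 2 → Fin 2 → ℂ) × (Fin 2 → Fin 2 → ℂ) =>
      p.2 0 0 * p.2 1 1 - p.2 0 1 * p.2 1 0) p
      = (p.2 0 0 • E2 1 1 + p.2 1 1 • E2 0 0) - (p.2 0 1 • E2 1 0 + p.2 1 0 • E2 0 1) :=
  (((hE2 0 0 p).mul (hE2 1 1 p)).sub ((hE2 0 1 p).mul (hE2 1 0 p))).fderiv

lemma fdG (p : (Fin 2 → Fin 2 → ℂ) × (Fin 2 → Fin 2 → ℂ)) :
    fderiv ℂ (fun p : (Fin 2 → Fin 2 → ℂ) × (Fin 2 → Fin 2 → ℂ) =>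
      ∑ i : Fin 2, ∑ j : Fin 2, p.1 i j * p.2 j i) p
      = ((p.1 0 0 • E2 0 0 + p.2 0 0 • E1 0 0) + (p.1 0 1 • E2 1 0 + p.2 1 0 • E1 0 1))
        + ((p.1 1 0 • E2 0 1 + p.2 0 1 • E1 1 0) + (p.1 1 1 • E2 1 1 + p.2 1 1 • E1 1 1)) := by
  have h : (fun p : (Fin 2 → Fin 2 → ℂ) × (Fin 2 → Fin 2 → ℂ) =>
      ∑ i : Fin 2, ∑ j : Fin 2, p.1 i j * p.2 j i)
      = fun p : (Fin 2 → Fin 2 → ℂ) × (Fin 2 → Fin 2 → ℂ) =>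
        (p.1 0 0 * p.2 0 0 + p.1 0 1 * p.2 1 0) + (p.1 1 0 * p.2 0 1 + p.1 1 1 * p.2 1 1) := by
    funext p; simp [Fin.sum_univ_two]
  rw [h]
  exact ((((hE1 0 0 p).mul (hE2 0 0 p)).add ((hE1 0 1 p).mul (hE2 1 0 p))).add
    (((hE1 1 0 p).mul (hE2 0 1 p)).add ((hE1 1 1 p).mul (hE2 1 1 p)))).fderiv

/-- On `X = M₂(ℂ) × M₂(ℂ)` with the canonical Poisson bracket pairing the
entries of `A` with the corresponding entries of `B`, the invariants
`α₁ = tr A`, `α₂ = det A`, `β₁ = tr B`, `β₂ = det B`, `γ = tr(AB)` satisfy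
`q(α₁,β₁) = 2`, `q(α₁,β₂) = β₁`, `q(α₂,β₁) = α₁`, `q(α₂,β₂) = γ`, `q(α₁,γ) = α₁`,
and in fact all brackets among the five invariants are those of the reduced bracket
`q_red = 2 ∂_{α₁}∧∂_{β₁} + β₁ ∂_{α₁}∧∂_{β₂} + α₁ ∂_{α₂}∧∂_{β₁} + γ ∂_{α₂}∧∂_{β₂}
 + (α₁ ∂_{α₁} - β₁ ∂_{β₁} + 2α₂ ∂_{α₂} - 2β₂ ∂_{β₂}) ∧ ∂_γ`. -/
theorem stmt14
    (q : ((Fin 2 → Fin 2 → ℂ) × (Fin 2 → Fin 2 → ℂ) → ℂ) →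
         ((Fin 2 → Fin 2 → ℂ) × (Fin 2 → Fin 2 → ℂ) → ℂ) →
         ((Fin 2 → Fin 2 → ℂ) × (Fin 2 → Fin 2 → ℂ) → ℂ))
    (hq : ∀ f g p, q f g p =
      ∑ i : Fin 2, ∑ j : Fin 2,
        (fderiv ℂ f p (Pi.single i (Pi.single j 1), 0) *
           fderiv ℂ g p (0, Pi.single j (Pi.single i 1))
         - fderiv ℂ f p (0, Pi.single j (Pi.single i 1)) *
           fderiv ℂ g p (Pi.single i (Pi.single j 1), 0)))
    (α₁ α₂ β₁ β₂ γ : (Fin 2 → Fin 2 → ℂ) × (Fin 2 → Fin 2 → ℂ) → ℂ)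
    (hα₁ : α₁ = fun p => p.1 0 0 + p.1 1 1)
    (hα₂ : α₂ = fun p => p.1 0 0 * p.1 1 1 - p.1 0 1 * p.1 1 0)
    (hβ₁ : β₁ = fun p => p.2 0 0 + p.2 1 1)
    (hβ₂ : β₂ = fun p => p.2 0 0 * p.2 1 1 - p.2 0 1 * p.2 1 0)
    (hγ : γ = fun p => ∑ i : Fin 2, ∑ j : Fin 2, p.1 i j * p.2 j i) :
    q α₁ β₁ = (fun _ => 2) ∧
    q α₁ β₂ = β₁ ∧
    q α₂ β₁ = α₁ ∧
    q α₂ β₂ = γ ∧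
    q α₁ γ = α₁ ∧
    q β₁ γ = (fun p => -β₁ p) ∧
    q α₂ γ = (fun p => 2 * α₂ p) ∧
    q β₂ γ = (fun p => -2 * β₂ p) ∧
    q α₁ α₂ = 0 ∧
    q β₁ β₂ = 0 := by
  subst hα₁ hα₂ hβ₁ hβ₂ hγ
  refine ⟨?_, ?_, ?_, ?_, ?_, ?_, ?_, ?_, ?_, ?_⟩ <;>
  · funext p
    rw [hq]
    simp only [fdA1, fdA2, fdB1, fdB2, fdG]
    simp only [Fin.sum_univ_two, ContinuousLinearMap.add_apply,
      ContinuousLinearMap.sub_apply, ContinuousLinearMap.smul_apply, E1app, E2app,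
      Pi.single_apply, Pi.zero_apply, smul_eq_mul]
    norm_num [Fin.sum_univ_two]
    try ring
end

section
/- On the affine chart x_0 = 1 of the quartic surface f = x_0 x_3³ − x_1² x_2² in ℂP³, the functions a = x_2/(x_3 √x_0) and b = x_1/(x_3 √x_0) satisfy q_f(a,b) = 1 on {f = 0}, where q_f = 3 x_0 x_3² ∂_1∧∂_2 − 2 x_1 x_2² ∂_2∧∂_3 − 2 x_1² x_2 ∂_3∧∂_1. -/
lemma deriv_coord_div (i j : Fin 3) (p : Fin 3 → ℝ) (hp : p 2 ≠ 0) :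
    fderiv ℝ (fun q : Fin 3 → ℝ => q i / q 2) p (Pi.single j 1) =
      ((Pi.single j 1 : Fin 3 → ℝ) i * p 2 - p i * (Pi.single j 1 : Fin 3 → ℝ) 2) / (p 2) ^ 2 := by
  have hi : HasFDerivAt (fun q : Fin 3 → ℝ => q i)
      (ContinuousLinearMap.proj i : (Fin 3 → ℝ) →L[ℝ] ℝ) p := by
    exact (ContinuousLinearMap.proj (R := ℝ) (φ := fun _ : Fin 3 => ℝ) i).hasFDerivAt
  have h2 : HasFDerivAt (fun q : Fin 3 → ℝ => q 2)
      (ContinuousLinearMap.proj 2 : (Fin 3 → ℝ) →L[ℝ] ℝ) p := by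
    exact (ContinuousLinearMap.proj (R := ℝ) (φ := fun _ : Fin 3 => ℝ) 2).hasFDerivAt
  have hinv : HasFDerivAt (fun q : Fin 3 → ℝ => (q 2)⁻¹)
      ((ContinuousLinearMap.smulRight (1 : ℝ →L[ℝ] ℝ) (-((p 2) ^ 2)⁻¹)).comp
        (ContinuousLinearMap.proj 2)) p :=
    (hasFDerivAt_inv hp).comp p h2
  have h := hi.mul hinv
  simp only [div_eq_mul_inv]
  rw [show (fun q : Fin 3 → ℝ => q i * (q 2)⁻¹) = (fun q => q i) * (fun q => (q 2)⁻¹) from rfl, h.fderiv]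
  simp [ContinuousLinearMap.proj_apply]
  field_simp
  ring

/-- On the affine chart `x₀ = 1` of the quartic `f = x₀x₃³ - x₁²x₂²`,
the functions `a = x₂/(x₃√x₀)` and `b = x₁/(x₃√x₀)` satisfy `q_f(a,b) = 1` on `{f = 0}`,
where `q_f = 3x₀x₃² ∂₁∧∂₂ - 2x₁x₂² ∂₂∧∂₃ - 2x₁²x₂ ∂₃∧∂₁`.
(Coordinates: `p 0, p 1, p 2` stand for `x₁, x₂, x₃`, and `x₀ = 1`.) -/
theorem stmt17
    (D : Fin 3 → ((Fin 3 → ℝ) → ℝ) → ((Fin 3 → ℝ) → ℝ))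
    (hD : ∀ i g p, D i g p = fderiv ℝ g p (Pi.single i 1))
    (qf : ((Fin 3 → ℝ) → ℝ) → ((Fin 3 → ℝ) → ℝ) → ((Fin 3 → ℝ) → ℝ))
    (hq : ∀ g h p, qf g h p =
        3 * (1 : ℝ) * (p 2) ^ 2 * (D 0 g p * D 1 h p - D 1 g p * D 0 h p)
      - 2 * p 0 * (p 1) ^ 2 * (D 1 g p * D 2 h p - D 2 g p * D 1 h p)
      - 2 * (p 0) ^ 2 * p 1 * (D 2 g p * D 0 h p - D 0 g p * D 2 h p))
    (a b : (Fin 3 → ℝ) → ℝ)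
    (ha : a = fun p => p 1 / (p 2 * Real.sqrt 1))
    (hb : b = fun p => p 0 / (p 2 * Real.sqrt 1)) :
    ∀ p : Fin 3 → ℝ, p 2 ≠ 0 → (1 : ℝ) * (p 2) ^ 3 = (p 0) ^ 2 * (p 1) ^ 2 →
      qf a b p = 1 := by
  intro p hp hf
  have ha' : a = fun q : Fin 3 → ℝ => q 1 / q 2 := by
    simp [ha, Real.sqrt_one]
  have hb' : b = fun q : Fin 3 → ℝ => q 0 / q 2 := by
    simp [hb, Real.sqrt_one]
  have key : ∀ i j : Fin 3, D j (fun q : Fin 3 → ℝ => q i / q 2) p =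
      ((Pi.single j 1 : Fin 3 → ℝ) i * p 2 - p i * (Pi.single j 1 : Fin 3 → ℝ) 2) / (p 2) ^ 2 := by
    intro i j
    rw [hD, deriv_coord_div i j p hp]
  rw [hq, ha', hb']
  rw [key, key, key, key, key, key]
  simp [Pi.single_apply]
  field_simp
  linear_combination (-4) * hf
end

section
/- On the hypersurface {x_0² x_3² = x_1² x_2²} with the bracket q_f = 2 x_0² x_3 ∂_1∧∂_2 + 2 x_1 x_2² ∂_2∧∂_3 + 2 x_1² x_2 ∂_3∧∂_1 (where ∂_i = ∂/∂x_i, x_0 a constant parameter), the functions a = x_1/(2 x_0 √x_3) and b = x_2/(2 x_0 √x_3) satisfy q_f(a,b) = 1 modulo the relation x_0² x_3² = x_1² x_2². -/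
/-- On `{x₀²x₃² = x₁²x₂²}` with the bracket
`q_f = 2x₀²x₃ ∂₁∧∂₂ + 2x₁x₂² ∂₂∧∂₃ + 2x₁²x₂ ∂₃∧∂₁` (`x₀ ≠ 0` a constant parameter),
the functions `a = x₁/(2x₀√x₃)` and `b = x₂/(2x₀√x₃)` satisfy `q_f(a,b) = 1`
modulo the relation `x₀²x₃² = x₁²x₂²` (for `x₃ > 0`).
(Coordinates: `p 0, p 1, p 2` stand for `x₁, x₂, x₃`.) -/
theorem stmt18 (x₀ : ℝ) (hx₀ : x₀ ≠ 0)
    (D : Fin 3 → ((Fin 3 → ℝ) → ℝ) → ((Fin 3 → ℝ) → ℝ))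
    (hD : ∀ i g p, D i g p = fderiv ℝ g p (Pi.single i 1))
    (qf : ((Fin 3 → ℝ) → ℝ) → ((Fin 3 → ℝ) → ℝ) → ((Fin 3 → ℝ) → ℝ))
    (hq : ∀ g h p, qf g h p =
        2 * x₀ ^ 2 * p 2 * (D 0 g p * D 1 h p - D 1 g p * D 0 h p)
      + 2 * p 0 * (p 1) ^ 2 * (D 1 g p * D 2 h p - D 2 g p * D 1 h p)
      + 2 * (p 0) ^ 2 * p 1 * (D 2 g p * D 0 h p - D 0 g p * D 2 h p))
    (a b : (Fin 3 → ℝ) → ℝ)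
    (ha : a = fun p => p 0 / (2 * x₀ * Real.sqrt (p 2)))
    (hb : b = fun p => p 1 / (2 * x₀ * Real.sqrt (p 2))) :
    ∀ p : Fin 3 → ℝ, 0 < p 2 → x₀ ^ 2 * (p 2) ^ 2 = (p 0) ^ 2 * (p 1) ^ 2 →
      qf a b p = 1 := by
  intro p h2 hrel
  set s : ℝ := Real.sqrt (p 2) with hs
  have hs0 : 0 < s := Real.sqrt_pos.mpr h2
  have hss : s ^ 2 = p 2 := Real.sq_sqrt h2.le
  -- the derivative of q ↦ q j / (2 x₀ √(q 2))
  have main : ∀ j : Fin 3, HasFDerivAt (fun q : Fin 3 → ℝ => q j / (2 * x₀ * Real.sqrt (q 2)))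
      (((2 * x₀)⁻¹ * s⁻¹) • (ContinuousLinearMap.proj j : (Fin 3 → ℝ) →L[ℝ] ℝ)
        + ((2 * x₀)⁻¹ * (p j * (-(1 / (2 * s)) / s ^ 2)))
          • (ContinuousLinearMap.proj 2 : (Fin 3 → ℝ) →L[ℝ] ℝ)) p := by
    intro j
    have hproj2 : HasFDerivAt (fun q : Fin 3 → ℝ => q 2)
        (ContinuousLinearMap.proj 2 : (Fin 3 → ℝ) →L[ℝ] ℝ) p :=
      (ContinuousLinearMap.proj 2 : (Fin 3 → ℝ) →L[ℝ] ℝ).hasFDerivAt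
    have hprojj : HasFDerivAt (fun q : Fin 3 → ℝ => q j)
        (ContinuousLinearMap.proj j : (Fin 3 → ℝ) →L[ℝ] ℝ) p :=
      (ContinuousLinearMap.proj j : (Fin 3 → ℝ) →L[ℝ] ℝ).hasFDerivAt
    have hsq : HasDerivAt (fun x : ℝ => (Real.sqrt x)⁻¹)
        (-(1 / (2 * s)) / s ^ 2) (p 2) :=
      (Real.hasDerivAt_sqrt h2.ne').inv hs0.ne'
    have hinv : HasFDerivAt (fun q : Fin 3 → ℝ => (Real.sqrt (q 2))⁻¹)
        ((-(1 / (2 * s)) / s ^ 2) • (ContinuousLinearMap.proj 2 : (Fin 3 → ℝ) →L[ℝ] ℝ)) p :=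
      HasDerivAt.comp_hasFDerivAt (h₂ := fun x : ℝ => (Real.sqrt x)⁻¹)
        (f := fun q : Fin 3 → ℝ => q 2) p hsq hproj2
    have hmul := hprojj.mul hinv
    have hfin := hmul.const_mul ((2 * x₀)⁻¹)
    have hfun : (fun q : Fin 3 → ℝ => (2 * x₀)⁻¹ * (q j * (Real.sqrt (q 2))⁻¹))
        = fun q : Fin 3 → ℝ => q j / (2 * x₀ * Real.sqrt (q 2)) := by
      funext q; ring
    simp only [Pi.mul_apply] at hfin
    rw [hfun] at hfin
    refine hfin.congr_fderiv ?_
    rw [← hs]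
    simp only [smul_smul, smul_add]
    module
  have Da : ∀ i : Fin 3, D i a p
      = ((2 * x₀)⁻¹ * s⁻¹) * ((Pi.single i 1 : Fin 3 → ℝ) 0)
        + ((2 * x₀)⁻¹ * (p 0 * (-(1 / (2 * s)) / s ^ 2))) * ((Pi.single i 1 : Fin 3 → ℝ) 2) := by
    intro i
    rw [hD, ha, (main 0).fderiv]
    simp [ContinuousLinearMap.proj_apply]
  have Db : ∀ i : Fin 3, D i b p
      = ((2 * x₀)⁻¹ * s⁻¹) * ((Pi.single i 1 : Fin 3 → ℝ) 1)
        + ((2 * x₀)⁻¹ * (p 1 * (-(1 / (2 * s)) / s ^ 2))) * ((Pi.single i 1 : Fin 3 → ℝ) 2) := by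
    intro i
    rw [hD, hb, (main 1).fderiv]
    simp [ContinuousLinearMap.proj_apply]
  rw [hq, Da 0, Da 1, Da 2, Db 0, Db 1, Db 2]
  have e00 : (Pi.single (0 : Fin 3) 1 : Fin 3 → ℝ) 0 = 1 := Pi.single_eq_same _ _
  have e11 : (Pi.single (1 : Fin 3) 1 : Fin 3 → ℝ) 1 = 1 := Pi.single_eq_same _ _
  have e22 : (Pi.single (2 : Fin 3) 1 : Fin 3 → ℝ) 2 = 1 := Pi.single_eq_same _ _
  have e01 : (Pi.single (0 : Fin 3) 1 : Fin 3 → ℝ) 1 = 0 := Pi.single_eq_of_ne (by decide) _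
  have e02 : (Pi.single (0 : Fin 3) 1 : Fin 3 → ℝ) 2 = 0 := Pi.single_eq_of_ne (by decide) _
  have e10 : (Pi.single (1 : Fin 3) 1 : Fin 3 → ℝ) 0 = 0 := Pi.single_eq_of_ne (by decide) _
  have e12 : (Pi.single (1 : Fin 3) 1 : Fin 3 → ℝ) 2 = 0 := Pi.single_eq_of_ne (by decide) _
  have e20 : (Pi.single (2 : Fin 3) 1 : Fin 3 → ℝ) 0 = 0 := Pi.single_eq_of_ne (by decide) _
  have e21 : (Pi.single (2 : Fin 3) 1 : Fin 3 → ℝ) 1 = 0 := Pi.single_eq_of_ne (by decide) _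
  rw [e00, e11, e22, e01, e02, e10, e12, e20, e21]
  have hp2 : p 2 = s ^ 2 := hss.symm
  rw [hp2] at hrel ⊢
  field_simp
  linear_combination (-(4 * s ^ 2)) * hrel
end
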